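/- Let A be a Novikov algebra over a field k of characteristic zero. Then γ_{i+1}(A)·γ_{j+1}(A) ⊆ γ_{i+j+1}(A) for all i, j ≥ 0, where γ_{i+1}(A)·γ_{j+1}(A) is the subspace spanned by all products x·y with x ∈ γ_{i+1}(A), y ∈ γ_{j+1}(A). -/

import Mathlib

/-!
In a left-symmetric algebra the commutator is a Lie bracket, so `[γᵢ, γⱼ] ⊆ γᵢ₊ⱼ` as for
any Lie algebra. The Novikov identity `(xy)z = (xz)y` adds
`2 [c, d]·y = [c, d·y] − [d, c·y]`, which lets one push a product `[c, d]·y` with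
`d ∈ γᵢ` into a commutator of one more level; dividing by `2` needs characteristic `≠ 2`.
Induction on `i` then shows that each `γⱼ` is a two-sided ideal and that
`γᵢ·γⱼ ⊆ γᵢ₊ⱼ₋₁`.
-/

variable {k A : Type*} [Field k] [CharZero k] [AddCommGroup A] [Module k A]

/-- The lower central series of an algebra `(A, mul)`:
`lcs mul i = γ_{i+1}(A)`, i.e. `lcs mul 0 = γ₁(A) = A` and
`lcs mul (i+1) = γ_{i+2}(A) = [A, γ_{i+1}(A)]`, the subspace spanned by all
commutators `x·y − y·x` with `x ∈ A`, `y ∈ γ_{i+1}(A)`. -/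
def lcs (mul : A →ₗ[k] A →ₗ[k] A) : ℕ → Submodule k A
  | 0 => ⊤
  | i + 1 =>
    Submodule.span k {z : A | ∃ x : A, ∃ y ∈ lcs mul i, z = mul x y - mul y x}

section Identities

variable {R M : Type*} [CommRing R] [AddCommGroup M] [Module R M]

def IsLeftSymmetric (mul : M →ₗ[R] M →ₗ[R] M) : Prop :=
  ∀ x y z : M, mul x (mul y z) - mul (mul x y) z = mul y (mul x z) - mul (mul y x) z

def IsNovikov (mul : M →ₗ[R] M →ₗ[R] M) : Prop :=
  IsLeftSymmetric mul ∧ ∀ x y z : M, mul (mul x y) z = mul (mul x z) y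

theorem IsLeftSymmetric.jacobi {mul : M →ₗ[R] M →ₗ[R] M} (hls : IsLeftSymmetric mul)
    (a b y : M) :
    mul (mul a b - mul b a) y - mul y (mul a b - mul b a) =
      (mul a (mul b y - mul y b) - mul (mul b y - mul y b) a)
        - (mul b (mul a y - mul y a) - mul (mul a y - mul y a) b) := by
  simp only [map_sub, LinearMap.sub_apply]
  linear_combination (norm := abel) - hls a b y - hls b y a + hls a y b

theorem IsNovikov.two_smul_commutator_mul {mul : M →ₗ[R] M →ₗ[R] M} (hnov : IsNovikov mul)
    (c d y : M) :
    (2 : R) • mul (mul c d - mul d c) y =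
      (mul c (mul d y) - mul (mul d y) c) - (mul d (mul c y) - mul (mul c y) d) := by
  rw [hnov.2 d y c, hnov.2 c y d, map_sub, LinearMap.sub_apply, two_smul]
  linear_combination (norm := abel) - hnov.1 c d y

end Identities

section LowerCentralSeries

variable {K V : Type*} [Field K] [AddCommGroup V] [Module K V] (mul : V →ₗ[K] V →ₗ[K] V)

theorem commutator_mem_lcs_succ (x : V) {y : V} {i : ℕ} (hy : y ∈ lcs mul i) :
    mul x y - mul y x ∈ lcs mul (i + 1) :=
  Submodule.subset_span ⟨x, y, hy, rfl⟩

variable {mul}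

theorem map_mem_of_mem_lcs_succ {i : ℕ} {f : V →ₗ[K] V} {S : Submodule K V}
    (h : ∀ a, ∀ b ∈ lcs mul i, f (mul a b - mul b a) ∈ S) {x : V}
    (hx : x ∈ lcs mul (i + 1)) : f x ∈ S :=
  (Submodule.span_le (p := S.comap f)).mpr (by rintro _ ⟨a, b, hb, rfl⟩; exact h a b hb) hx

theorem lcs_succ_le : ∀ i : ℕ, lcs mul (i + 1) ≤ lcs mul i
  | 0 => le_top
  | i + 1 => Submodule.span_le.mpr <| by
    rintro _ ⟨x, y, hy, rfl⟩
    exact commutator_mem_lcs_succ mul x (lcs_succ_le i hy)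

theorem IsLeftSymmetric.commutator_mem_lcs (hls : IsLeftSymmetric mul) :
    ∀ p q : ℕ, ∀ x ∈ lcs mul p, ∀ y ∈ lcs mul q, mul x y - mul y x ∈ lcs mul (p + q + 1)
  | 0, q => fun x _ y hy => by simpa using commutator_mem_lcs_succ mul x hy
  | p + 1, q => fun x hx y hy => by
    refine map_mem_of_mem_lcs_succ (f := mul.flip y - mul y) (fun a b hb => ?_) hx
    simp only [LinearMap.sub_apply, LinearMap.flip_apply, hls.jacobi]
    rw [Nat.add_right_comm p 1 q]
    exact sub_mem (commutator_mem_lcs_succ mul a (hls.commutator_mem_lcs p q b hb y hy))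
      (hls.commutator_mem_lcs p (q + 1) b hb _ (commutator_mem_lcs_succ mul a hy))

theorem IsNovikov.mul_mem_lcs_of_left_mem [NeZero (2 : K)] (hnov : IsNovikov mul) :
    ∀ j : ℕ, ∀ y ∈ lcs mul j, ∀ x : V, mul y x ∈ lcs mul j
  | 0 => fun _ _ _ => Submodule.mem_top
  | j + 1 => fun y hy x => by
    refine map_mem_of_mem_lcs_succ (f := mul.flip x) (fun a b hb => ?_) hy
    rw [LinearMap.flip_apply, ← Submodule.smul_mem_iff _ (two_ne_zero (α := K)),
      hnov.two_smul_commutator_mul]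
    exact sub_mem (commutator_mem_lcs_succ mul a (hnov.mul_mem_lcs_of_left_mem j b hb x))
      (neg_mem_iff.mp (by simpa using commutator_mem_lcs_succ mul (mul a x) hb))

theorem IsNovikov.mul_mem_lcs_of_right_mem [NeZero (2 : K)] (hnov : IsNovikov mul) (j : ℕ)
    {y : V} (hy : y ∈ lcs mul j) (x : V) : mul x y ∈ lcs mul j := by
  rw [← add_sub_cancel (mul y x) (mul x y)]
  exact add_mem (hnov.mul_mem_lcs_of_left_mem j y hy x)
    (lcs_succ_le j (commutator_mem_lcs_succ mul x hy))

theorem IsNovikov.mul_mem_lcs [NeZero (2 : K)] (hnov : IsNovikov mul) :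
    ∀ i j : ℕ, ∀ x ∈ lcs mul i, ∀ y ∈ lcs mul j, mul x y ∈ lcs mul (i + j)
  | 0, j => fun x _ y hy => by simpa using hnov.mul_mem_lcs_of_right_mem j hy x
  | i + 1, j => fun x hx y hy => by
    refine map_mem_of_mem_lcs_succ (f := mul.flip y) (fun a b hb => ?_) hx
    rw [LinearMap.flip_apply, ← Submodule.smul_mem_iff _ (two_ne_zero (α := K)),
      hnov.two_smul_commutator_mul, Nat.add_right_comm i 1 j]
    exact sub_mem (commutator_mem_lcs_succ mul a (hnov.mul_mem_lcs i j b hb y hy))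
      (hnov.1.commutator_mem_lcs i j b hb _ (hnov.mul_mem_lcs_of_right_mem j hy a))

end LowerCentralSeries

/-- In a Novikov algebra `A` over a field `k` of characteristic zero,
`γ_{i+1}(A)·γ_{j+1}(A) ⊆ γ_{i+j+1}(A)` for all `i, j ≥ 0`. -/
theorem novikov_lcs_mul_lcs
    (mul : A →ₗ[k] A →ₗ[k] A)
    (hls : ∀ x y z : A,
      mul x (mul y z) - mul (mul x y) z = mul y (mul x z) - mul (mul y x) z)
    (hnov : ∀ x y z : A, mul (mul x y) z = mul (mul x z) y) :
    ∀ i j : ℕ,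
      Submodule.span k {z : A | ∃ x ∈ lcs mul i, ∃ y ∈ lcs mul j, z = mul x y}
        ≤ lcs mul (i + j) := fun i j =>
  Submodule.span_le.mpr <| by
    rintro _ ⟨x, hx, y, hy, rfl⟩
    exact IsNovikov.mul_mem_lcs ⟨hls, hnov⟩ i j x hx y hy
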